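/- arXiv:2405.11849 — 2 statements merged into one kernel-verified Lean document; each statement's English description precedes it below -/
import Mathlib

section
/- Let w' be a word over alphabet Σ of size s, arranged as sorted blocks σ_1^{m_1} σ_2^{m_2} ··· σ_s^{m_s}, and let ā be a jump sequence with maximum-jump cost at most k. Then the word w'_ā is a concatenation of at most (s-1)(2k+1)+1 maximal blocks of identical letters. -/
open scoped Classical

/-- A jump sequence for a word of length `n`: `a 0 = 0`, `a (n+1) = n+1`, and
`a` restricted to `{1,…,n}` is a permutation of `{1,…,n}`. -/
def IsJumpSeq (n : ℕ) (a : ℕ → ℕ) : Prop :=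
  a 0 = 0 ∧ a (n + 1) = n + 1 ∧ Set.BijOn a (Set.Icc 1 n) (Set.Icc 1 n)

/-- The absolute-distance cost `⟦ā⟧ = Σ_{i=1}^{n+1} (|a_i - a_{i-1}| - 1)`. -/
def absCost (n : ℕ) (a : ℕ → ℕ) : ℕ :=
  ∑ i ∈ Finset.range (n + 1), (((a (i + 1) : ℤ) - (a i : ℤ)).natAbs - 1)

/-- The maximum-jump cost `max_{i=1}^{n+1} (|a_i - a_{i-1}| - 1)`. -/
def maxCost (n : ℕ) (a : ℕ → ℕ) : ℕ :=
  (Finset.range (n + 1)).sup (fun i => ((a (i + 1) : ℤ) - (a i : ℤ)).natAbs - 1)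

/-- The word `w_ā = w_{a_1} ⋯ w_{a_n}` (1-based indexing into `w`). -/
def applyJump {α : Type*} [Inhabited α] (a : ℕ → ℕ) (w : List α) : List α :=
  (List.range w.length).map (fun i => w.getD (a (i + 1) - 1) default)

/-- `i` is a turning index of the jump sequence `a`. -/
def IsTurn (a : ℕ → ℕ) (i : ℕ) : Prop :=
  (a i > a (i - 1) ∧ a i > a (i + 1)) ∨ (a i < a (i - 1) ∧ a i < a (i + 1))

/-- The number of turning indices of `a` (among `1,…,n`). -/
noncomputable def turnCount (n : ℕ) (a : ℕ → ℕ) : ℕ :=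
  ((Finset.Icc 1 n).filter (fun i => IsTurn a i)).card

/-- Hamming distance between two (equal-length) words. -/
noncomputable def hamming {α : Type*} [Inhabited α] (w w' : List α) : ℕ :=
  ((Finset.range w.length).filter (fun i => w.getD i default ≠ w'.getD i default)).card

/-!
A letter change between consecutive positions of `w'_ā` means that the step `a_i → a_{i+1}`
crosses one of the `s - 1` cuts between the blocks of `w'`. A cut is crossed upwards once
more than downwards, since the walk starts at `0` and ends at `n + 1`, and every upward
crossing starts at one of the `k + 1` positions just below the cut, each visited at most once.
So each cut is crossed at most `2k + 1` times, and `w'_ā` has at most `(s - 1)(2k + 1)`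
letter changes.
-/

open Finset

section Lists

variable {α : Type*}

theorem exists_replicate_blocks_range_succ (f : ℕ → α) (n : ℕ) :
    ∃ r ≤ #{i ∈ range n | f i ≠ f (i + 1)}, ∃ (τ : Fin (r + 1) → α) (cnt : Fin (r + 1) → ℕ),
      τ 0 = f 0 ∧
        (List.range (n + 1)).map f = (List.ofFn fun j => List.replicate (cnt j) (τ j)).flatten := by
  induction n generalizing f with
  | zero => exact ⟨0, le_rfl, fun _ => f 0, fun _ => 1, rfl, by simp⟩
  | succ n ih =>
    obtain ⟨r, hr, τ, cnt, hτ, heq⟩ := ih fun i => f (i + 1)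
    have hsplit :
        (List.range (n + 2)).map f = f 0 :: (List.range (n + 1)).map fun i => f (i + 1) := by
      simp [List.range_succ_eq_map]
    have hcard : #{i ∈ range (n + 1) | f i ≠ f (i + 1)}
        = #{i ∈ range n | f (i + 1) ≠ f (i + 1 + 1)} + if f 0 ≠ f 1 then 1 else 0 := by
      simp only [card_filter, sum_range_succ']
    rw [hsplit, heq]
    by_cases h : f 0 = f 1
    · refine ⟨r, by simp [hcard, h, hr], τ, Function.update cnt 0 (cnt 0 + 1), hτ.trans h.symm, ?_⟩
      simp [List.ofFn_succ, hτ, h, List.replicate_succ]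
    · refine ⟨r + 1, by simp [hcard, h, hr], Fin.cons (f 0) τ, Fin.cons 1 cnt, rfl, ?_⟩
      simp

theorem exists_replicate_blocks_range (f : ℕ → α) (n : ℕ) :
    ∃ r ≤ #{i ∈ range (n - 1) | f i ≠ f (i + 1)} + 1, ∃ (τ : Fin r → α) (cnt : Fin r → ℕ),
      (List.range n).map f = (List.ofFn fun j => List.replicate (cnt j) (τ j)).flatten := by
  cases n with
  | zero => exact ⟨0, Nat.zero_le _, Fin.elim0, Fin.elim0, rfl⟩
  | succ n =>
    obtain ⟨r, hr, τ, cnt, -, heq⟩ := exists_replicate_blocks_range_succ f n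
    exact ⟨r + 1, by simpa using hr, τ, cnt, heq⟩

/-- The cut between positions `c - 1` and `c` separates `x` and `y`. -/
def Crosses (x y c : ℕ) : Prop :=
  x < c ∧ c ≤ y ∨ y < c ∧ c ≤ x

theorem exists_crosses_cut_of_getElem_flatten_ne {L : List (List α)}
    (hL : ∀ l ∈ L, ∀ x ∈ l, ∀ y ∈ l, x = y) {p q : ℕ} (hp : p < L.flatten.length)
    (hq : q < L.flatten.length) (hne : L.flatten[p] ≠ L.flatten[q]) :
    ∃ t ∈ Ioo 0 L.length, Crosses p q (L.take t).flatten.length := by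
  induction L generalizing p q with
  | nil => simp at hp
  | cons l L ih =>
    simp only [List.flatten_cons, List.length_append] at hp hq hne
    have hcut_one (h : l.length ≤ max p q) :
        1 ∈ Ioo 0 (l :: L).length ∧ ((l :: L).take 1).flatten.length = l.length := by
      rcases L with _ | _ <;> simp at hp hq ⊢
      omega
    by_cases hpl : p < l.length <;> by_cases hql : q < l.length
    · rw [List.getElem_append_left hpl, List.getElem_append_left hql] at hne
      exact absurd (hL l List.mem_cons_self _ (List.getElem_mem _) _ (List.getElem_mem _)) hne
    · obtain ⟨h1, hlen⟩ := hcut_one (by omega)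
      exact ⟨1, h1, by rw [Crosses, hlen]; omega⟩
    · obtain ⟨h1, hlen⟩ := hcut_one (by omega)
      exact ⟨1, h1, by rw [Crosses, hlen]; omega⟩
    · rw [List.getElem_append_right (not_lt.1 hpl), List.getElem_append_right (not_lt.1 hql)] at hne
      obtain ⟨t, ht, hc⟩ := ih (fun l' hl' => hL l' (List.mem_cons_of_mem _ hl')) (by omega)
        (by omega) hne
      rw [mem_Ioo] at ht
      refine ⟨t + 1, by simp only [mem_Ioo, List.length_cons]; omega, ?_⟩
      simp only [Crosses, List.take_succ_cons, List.flatten_cons, List.length_append] at hc ⊢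
      omega

end Lists

section Crossings

variable (a : ℕ → ℕ) {n c : ℕ}

theorem card_up_eq_card_down_add_one (h0 : a 0 < c) (hn : c ≤ a n) :
    #{j ∈ range n | a j < c ∧ c ≤ a (j + 1)} = #{j ∈ range n | a (j + 1) < c ∧ c ≤ a j} + 1 := by
  have hterm : ∀ j, ((if a j < c ∧ c ≤ a (j + 1) then 1 else 0 : ℤ)
      - if a (j + 1) < c ∧ c ≤ a j then 1 else 0)
      = (if a j < c then 1 else 0) - if a (j + 1) < c then 1 else 0 := by
    intro j
    split_ifs <;> omega
  have htel := sum_range_sub' (fun j => if a j < c then (1 : ℤ) else 0) n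
  simp only [h0, if_true, not_lt.2 hn, if_false, ← sum_congr rfl fun j _ => hterm j,
    sum_sub_distrib] at htel
  refine Nat.cast_injective (R := ℤ) ?_
  rw [Nat.cast_add, Nat.cast_one, natCast_card_filter, natCast_card_filter]
  linarith

theorem card_up_le {k : ℕ} (hinj : Set.InjOn a (Set.Iio n))
    (hstep : ∀ j < n, a (j + 1) ≤ a j + (k + 1)) :
    #{j ∈ range n | a j < c ∧ c ≤ a (j + 1)} ≤ k + 1 := by
  calc #{j ∈ range n | a j < c ∧ c ≤ a (j + 1)}
      ≤ #(Ico (c - (k + 1)) c) := by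
        refine card_le_card_of_injOn a (fun j hj => ?_) (hinj.mono fun j hj => ?_)
        · obtain ⟨hjn, hjc⟩ := mem_filter.1 hj
          have := hstep j (mem_range.1 hjn)
          simp only [coe_Ico, Set.mem_Ico]
          omega
        · simpa using (mem_filter.1 hj).1
    _ ≤ k + 1 := by simp only [Nat.card_Ico]; omega

theorem card_crosses_le {k : ℕ} (hinj : Set.InjOn a (Set.Iio n)) (h0 : a 0 < c) (hn : c ≤ a n)
    (hstep : ∀ j < n, a (j + 1) ≤ a j + (k + 1)) :
    #{j ∈ range n | Crosses (a j) (a (j + 1)) c} ≤ 2 * k + 1 := by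
  have hup := card_up_le a hinj hstep (c := c)
  have hdown := card_up_eq_card_down_add_one a h0 hn
  calc #{j ∈ range n | Crosses (a j) (a (j + 1)) c}
      ≤ #({j ∈ range n | a j < c ∧ c ≤ a (j + 1)} ∪ {j ∈ range n | a (j + 1) < c ∧ c ≤ a j}) := by
        refine card_le_card fun j hj => ?_
        rw [mem_filter, Crosses] at hj
        rw [mem_union, mem_filter, mem_filter]
        tauto
    _ ≤ 2 * k + 1 := by
        refine (card_union_le _ _).trans ?_
        omega

end Crossings

theorem IsJumpSeq.injOn {n : ℕ} {a : ℕ → ℕ} (hj : IsJumpSeq n a) :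
    Set.InjOn a (Set.Iio (n + 1)) := by
  have hIio : Set.Iio (n + 1) = insert 0 (Set.Icc 1 n) := by
    ext i
    simp only [Set.mem_Iio, Set.mem_insert_iff, Set.mem_Icc]
    omega
  rw [hIio, Set.injOn_insert (by simp)]
  refine ⟨hj.2.2.injOn, fun ⟨i, hi, hai⟩ => ?_⟩
  have := (hj.2.2.mapsTo hi).1
  rw [hai, hj.1] at this
  omega

theorem le_add_of_maxCost_le {n k : ℕ} {a : ℕ → ℕ} (h : maxCost n a ≤ k) {j : ℕ} (hj : j ≤ n) :
    a (j + 1) ≤ a j + (k + 1) := by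
  have := (le_sup (f := fun i => ((a (i + 1) : ℤ) - a i).natAbs - 1)
    (mem_range.2 (Nat.lt_succ_of_le hj))).trans h
  omega

theorem card_jump_changes_le {α : Type*} [Inhabited α] {L : List (List α)}
    (hL : ∀ l ∈ L, ∀ x ∈ l, ∀ y ∈ l, x = y) {a : ℕ → ℕ} {k : ℕ}
    (hj : IsJumpSeq L.flatten.length a) (hmax : maxCost L.flatten.length a ≤ k) :
    #{i ∈ range (L.flatten.length - 1) |
        L.flatten.getD (a (i + 1) - 1) default ≠ L.flatten.getD (a (i + 1 + 1) - 1) default}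
      ≤ (L.length - 1) * (2 * k + 1) := by
  set n := L.flatten.length
  -- `a` indexes the word from `1`, so the cuts are shifted by one.
  have hcut : ∀ i < n - 1, L.flatten.getD (a (i + 1) - 1) default
      ≠ L.flatten.getD (a (i + 1 + 1) - 1) default →
      ∃ t ∈ Ioo 0 L.length,
        Crosses (a (i + 1)) (a (i + 1 + 1)) ((L.take t).flatten.length + 1) := by
    intro i hi hne
    obtain ⟨hx1, hxn⟩ := hj.2.2.mapsTo (show i + 1 ∈ Set.Icc 1 n from ⟨by omega, by omega⟩)
    obtain ⟨hy1, hyn⟩ := hj.2.2.mapsTo (show i + 1 + 1 ∈ Set.Icc 1 n from ⟨by omega, by omega⟩)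
    rw [List.getD_eq_getElem _ _ (by omega), List.getD_eq_getElem _ _ (by omega)] at hne
    obtain ⟨t, ht, hc⟩ := exists_crosses_cut_of_getElem_flatten_ne hL _ _ hne
    exact ⟨t, ht, by unfold Crosses at hc ⊢; omega⟩
  calc _ ≤ #((Ioo 0 L.length).biUnion fun t =>
          {j ∈ range (n + 1) | Crosses (a j) (a (j + 1)) ((L.take t).flatten.length + 1)}) := by
        refine card_le_card_of_injOn (· + 1) (fun i hi => ?_) (add_left_injective 1).injOn
        obtain ⟨hi, hne⟩ := mem_filter.1 hi
        rw [mem_range] at hi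
        obtain ⟨t, ht, hc⟩ := hcut i hi hne
        show i + 1 ∈ _
        exact mem_biUnion.2 ⟨t, ht, mem_filter.2 ⟨mem_range.2 (by omega), hc⟩⟩
    _ ≤ #(Ioo 0 L.length) * (2 * k + 1) := by
        refine card_biUnion_le_card_mul _ _ _ fun t _ => card_crosses_le a hj.injOn ?_ ?_
          fun j hj' => le_add_of_maxCost_le hmax (by omega)
        · rw [hj.1]
          omega
        · rw [hj.2.1]
          have := ((List.take_sublist t L).flatten).length_le
          omega
    _ = (L.length - 1) * (2 * k + 1) := by simp

theorem blocks_of_maxCost_le_general {α : Type*} [Inhabited α] (s k : ℕ) (σ : Fin s → α)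
    (m : Fin s → ℕ) (w' : List α)
    (hw : w' = (List.ofFn (fun j => List.replicate (m j) (σ j))).flatten)
    (a : ℕ → ℕ) (hj : IsJumpSeq w'.length a) (hmax : maxCost w'.length a ≤ k) :
    ∃ r ≤ (s - 1) * (2 * k + 1) + 1, ∃ (τ : Fin r → α) (cnt : Fin r → ℕ),
      applyJump a w' = (List.ofFn (fun j => List.replicate (cnt j) (τ j))).flatten := by
  subst hw
  have hconst :
      ∀ l ∈ List.ofFn (fun j => List.replicate (m j) (σ j)), ∀ x ∈ l, ∀ y ∈ l, x = y := by
    intro l hl x hx y hy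
    obtain ⟨j, rfl⟩ := List.mem_ofFn.1 hl
    rw [List.eq_of_mem_replicate hx, List.eq_of_mem_replicate hy]
  have hchanges := card_jump_changes_le hconst hj hmax
  rw [List.length_ofFn] at hchanges
  obtain ⟨r, hr, τ, cnt, hblocks⟩ := exists_replicate_blocks_range (fun i =>
    (List.ofFn (fun j => List.replicate (m j) (σ j))).flatten.getD (a (i + 1) - 1) default) _
  exact ⟨r, hr.trans (by omega), τ, cnt, hblocks⟩

/-- if `w'` consists of sorted blocks `σ_1^{m_1} ⋯ σ_s^{m_s}` (the `σ_j`
distinct) and `ā` has maximum-jump cost at most `k`, then `w'_ā` is a concatenation of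
at most `(s-1)(2k+1)+1` constant blocks. -/
theorem blocks_of_maxCost_le {α : Type*} [Inhabited α] (s k : ℕ) (σ : Fin s → α)
    (hinj : Function.Injective σ) (m : Fin s → ℕ) (w' : List α)
    (hw : w' = (List.ofFn (fun j => List.replicate (m j) (σ j))).flatten)
    (a : ℕ → ℕ) (hj : IsJumpSeq w'.length a) (hmax : maxCost w'.length a ≤ k) :
    ∃ r ≤ (s - 1) * (2 * k + 1) + 1, ∃ (τ : Fin r → α) (cnt : Fin r → ℕ),
      applyJump a w' = (List.ofFn (fun j => List.replicate (cnt j) (τ j))).flatten :=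
  blocks_of_maxCost_le_general s k σ m w' hw a hj hmax
end

section
/- For every word w over an alphabet Σ and every word u of the form τ_1^{r_1} ··· τ_m^{r_m} (a concatenation of m constant blocks) that is a permutation of w, there exists a jump sequence ā with w_ā = u whose number of turning indices is at most m. -/
open scoped Classical

/-! Fix a letter-preserving bijection between the positions of `u` and of `w`; it labels every
position of `w` with the block of `u` it must fill. Reading the positions of `w` block by block,
upwards inside even blocks and downwards inside odd ones, yields a jump sequence spelling `u`.
Inside a block the direction of travel never changes, and the quantity
"block index + [the current direction is the one of the current block]" increases at every
change of direction while staying between `1` and `m + 1`; hence there are at most `m` turns. -/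

open Finset

theorem List.Perm.exists_equiv_getElem {α : Type*} {l₁ l₂ : List α} (h : l₁.Perm l₂) :
    ∃ e : Fin l₁.length ≃ Fin l₂.length, ∀ i, l₂[e i] = l₁[i] := by
  induction h with
  | nil => exact ⟨Equiv.refl _, fun i => i.elim0⟩
  | cons x _ ih =>
    obtain ⟨e, he⟩ := ih
    refine ⟨(finSuccEquiv _).trans ((Equiv.optionCongr e).trans (finSuccEquiv _).symm), ?_⟩
    intro i
    induction i using Fin.cases
    · simp
    · simpa using he _
  | swap x y l =>
    refine ⟨Equiv.swap 0 1, fun i => ?_⟩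
    rcases i with ⟨_ | _ | i, hi⟩ <;> simp [Equiv.swap_apply_of_ne_of_ne, Fin.ext_iff]
  | trans _ _ ih₁ ih₂ =>
    obtain ⟨e₁, he₁⟩ := ih₁
    obtain ⟨e₂, he₂⟩ := ih₂
    exact ⟨e₁.trans e₂, fun i => by simp [he₁, he₂]⟩

theorem exists_monotone_getElem_flatten_ofFn_replicate {α : Type*} {m : ℕ}
    (τ : Fin m → α) (r : Fin m → ℕ) {u : List α}
    (hu : u = (List.ofFn fun j => List.replicate (r j) (τ j)).flatten) :
    ∃ β : Fin u.length → Fin m, Monotone β ∧ ∀ p, u[p] = τ (β p) := by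
  induction m generalizing u with
  | zero =>
    simp only [List.ofFn_zero, List.flatten_nil] at hu
    subst hu
    exact ⟨fun p => p.elim0, fun p => p.elim0, fun p => p.elim0⟩
  | succ m ih =>
    rw [List.ofFn_succ, List.flatten_cons] at hu
    obtain ⟨β, hβ, huβ⟩ := ih (fun j => τ j.succ) (fun j => r j.succ) rfl
    subst hu
    refine ⟨fun p => if h : (p : ℕ) < r 0 then 0 else (β ⟨p - r 0, ?_⟩).succ, ?_, ?_⟩
    · have := p.2; simp only [List.length_append, List.length_replicate] at this; omega
    · intro p q hpq
      have hpq' : (p : ℕ) ≤ q := hpq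
      dsimp only
      split_ifs with hp hq hq
      · exact le_rfl
      · exact Fin.zero_le _
      · omega
      · exact Fin.succ_le_succ_iff.mpr (hβ (by simp only [Fin.mk_le_mk]; omega))
    · intro p
      simp only [Fin.getElem_fin]
      split_ifs with hp
      · rw [List.getElem_append_left (by simpa using hp)]; simp
      · rw [List.getElem_append_right (by simp; omega)]
        simp only [List.length_replicate]
        exact huβ ⟨_, _⟩

theorem exists_boustrophedon_sort {n : ℕ} (g : Fin n → ℕ) (s : Equiv.Perm (Fin n))
    (hs : Monotone (g ∘ s)) :
    ∃ σ : Equiv.Perm (Fin n), g ∘ σ = g ∘ s ∧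
      ∀ p q, p < q → g (σ p) = g (σ q) → (σ p < σ q ↔ Even (g (σ p))) := by
  let key : Fin n → ℕ ×ₗ ℕ := fun k => toLex (g k, if Even (g k) then k else n - k)
  let σ := Tuple.sort key
  have hkey : Monotone (key ∘ σ) := Tuple.monotone_sort key
  have hgσ : Monotone (g ∘ σ) := fun p q hpq => (Prod.Lex.toLex_le_toLex'.mp (hkey hpq)).1
  refine ⟨σ, Tuple.unique_monotone hgσ hs, fun p q hpq hg => ?_⟩
  have hle := (Prod.Lex.toLex_le_toLex'.mp (hkey hpq.le)).2 hg
  have hne : (σ p : ℕ) ≠ σ q := fun h => hpq.ne (σ.injective (Fin.ext h))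
  have hp := (σ p).2
  have hq := (σ q).2
  simp only [← hg] at hle
  split_ifs at hle with heven
  · simp only [heven, iff_true, Fin.lt_def]; omega
  · simp only [heven, iff_false, Fin.lt_def]; omega

def jumpSeqOfPerm {n : ℕ} (σ : Equiv.Perm (Fin n)) (t : ℕ) : ℕ :=
  if h : 0 < t ∧ t ≤ n then σ ⟨t - 1, by omega⟩ + 1 else t

section jumpSeqOfPerm

variable {n : ℕ} (σ : Equiv.Perm (Fin n))

theorem jumpSeqOfPerm_succ (p : Fin n) : jumpSeqOfPerm σ (p + 1) = σ p + 1 := by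
  simp [jumpSeqOfPerm, Nat.succ_le_of_lt p.2]

theorem jumpSeqOfPerm_of_notMem_Icc {t : ℕ} (ht : t ∉ Set.Icc 1 n) :
    jumpSeqOfPerm σ t = t := by
  simp only [Set.mem_Icc, not_and_or, not_le] at ht
  rw [jumpSeqOfPerm, dif_neg (by omega)]

theorem isJumpSeq_jumpSeqOfPerm : IsJumpSeq n (jumpSeqOfPerm σ) := by
  refine ⟨jumpSeqOfPerm_of_notMem_Icc σ (by simp), jumpSeqOfPerm_of_notMem_Icc σ (by simp),
    ?_, ?_, ?_⟩
  · rintro t ⟨ht1, htn⟩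
    obtain ⟨p, rfl⟩ : ∃ p : Fin n, t = p + 1 := ⟨⟨t - 1, by omega⟩, by simp; omega⟩
    rw [jumpSeqOfPerm_succ]
    exact ⟨by omega, (σ p).2⟩
  · rintro t ⟨ht1, htn⟩ t' ⟨ht1', htn'⟩ h
    obtain ⟨p, rfl⟩ : ∃ p : Fin n, t = p + 1 := ⟨⟨t - 1, by omega⟩, by simp; omega⟩
    obtain ⟨q, rfl⟩ : ∃ q : Fin n, t' = q + 1 := ⟨⟨t' - 1, by omega⟩, by simp; omega⟩
    rw [jumpSeqOfPerm_succ, jumpSeqOfPerm_succ, add_left_inj, Fin.val_inj] at h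
    rw [σ.injective h]
  · rintro y ⟨hy1, hyn⟩
    refine ⟨σ.symm ⟨y - 1, by omega⟩ + 1, ⟨by omega, (σ.symm _).2⟩, ?_⟩
    rw [jumpSeqOfPerm_succ, Equiv.apply_symm_apply, Fin.val_mk]
    omega

end jumpSeqOfPerm

theorem applyJump_jumpSeqOfPerm {α : Type*} [Inhabited α] (w : List α)
    (σ : Equiv.Perm (Fin w.length)) :
    applyJump (jumpSeqOfPerm σ) w = List.ofFn fun p => w[σ p] := by
  refine List.ext_getElem (by simp [applyJump]) fun i hi _ => ?_
  simp only [applyJump, List.getElem_map, List.getElem_range, List.getElem_ofFn]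
  rw [show i + 1 = (⟨i, by simpa [applyJump] using hi⟩ : Fin w.length) + 1 from rfl,
    jumpSeqOfPerm_succ, Nat.add_sub_cancel, List.getD_eq_getElem, Fin.getElem_fin]

theorem IsJumpSeq.ne_succ {n : ℕ} {a : ℕ → ℕ} (ha : IsJumpSeq n a) {t : ℕ} (ht : t ≤ n) :
    a t ≠ a (t + 1) := by
  obtain ⟨h0, hn, hmaps, hinj, -⟩ := ha
  rcases Nat.eq_zero_or_pos t with rfl | ht0
  · rcases Nat.eq_zero_or_pos n with rfl | hn0
    · simp [h0, hn]
    · have := (hmaps (show 1 ∈ Set.Icc 1 n from ⟨le_rfl, hn0⟩)).1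
      rw [h0, zero_add]
      omega
  rcases Nat.lt_or_ge t n with htn | htn
  · exact fun h => absurd (hinj ⟨ht0, ht⟩ ⟨by omega, htn⟩ h) (by omega)
  · have := (hmaps (show t ∈ Set.Icc 1 n from ⟨ht0, ht⟩)).2
    rw [show t + 1 = n + 1 by omega, hn]
    omega

theorem IsJumpSeq.turnCount_eq {n : ℕ} {a : ℕ → ℕ} (ha : IsJumpSeq n a) :
    turnCount n a =
      #{i ∈ range n | decide (a i < a (i + 1)) ≠ decide (a (i + 1) < a (i + 2))} := by
  have hturn : ∀ i ∈ range n,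
      IsTurn a (i + 1) ↔ decide (a i < a (i + 1)) ≠ decide (a (i + 1) < a (i + 2)) := by
    intro i hi
    have h₁ : a i ≠ a (i + 1) := ha.ne_succ (by simp at hi; omega)
    have h₂ : a (i + 1) ≠ a (i + 2) := ha.ne_succ (by simp at hi; omega)
    simp only [IsTurn, Nat.add_sub_cancel, ne_eq, decide_eq_decide, add_assoc, Nat.reduceAdd]
    omega
  have hIcc : Icc 1 n = (range n).map (addRightEmbedding 1) := by
    ext t
    simp only [mem_Icc, mem_map, mem_range, addRightEmbedding_apply]
    exact ⟨fun h => ⟨t - 1, by omega, by omega⟩, by omega⟩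
  rw [turnCount, hIcc, filter_map, card_map]
  exact congrArg card (filter_congr hturn)

theorem card_filter_ne_succ_le {n : ℕ} (d : ℕ → Bool) (c : ℕ → ℕ)
    (hc : ∀ i < n, c i ≤ c (i + 1))
    (hd : ∀ i < n, c i = c (i + 1) → d (i + 1) = decide (Even (c (i + 1))))
    (hd₀ : d 0 = true) :
    #{i ∈ range n | d i ≠ d (i + 1)} ≤ c n := by
  -- `c k`, plus one when `d k` agrees with the parity of `c k`, grows at every change of `d`
  suffices key : ∀ k ≤ n,
      #{i ∈ range k | d i ≠ d (i + 1)} + 1 ≤ c k + if d k = decide (Even (c k)) then 1 else 0 by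
    have := key n le_rfl
    split_ifs at this <;> omega
  intro k hk
  induction k with
  | zero =>
    rcases Nat.even_or_odd (c 0) with h | h
    · simp [hd₀, h]
    · simp [hd₀, Nat.not_even_iff_odd.mpr h]
      exact h.pos
  | succ k ih =>
    specialize ih (by omega)
    rw [card_filter, sum_range_succ, ← card_filter]
    have hck := hc k (by omega)
    obtain hjump | hsame | hsucc :
        c k + 1 < c (k + 1) ∨ c (k + 1) = c k ∨ c (k + 1) = c k + 1 := by omega
    · split_ifs at * <;> omega
    · have hdk := hd k (by omega) hsame.symm
      rw [hsame] at hdk ⊢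
      split_ifs at * <;> simp_all
    · have hpar : decide (Even (c (k + 1))) = !decide (Even (c k)) := by
        simp [hsucc, Nat.even_add_one, -Nat.not_even_iff_odd]
      rw [hpar, hsucc]
      split_ifs at * <;> simp_all
      omega

theorem turnCount_jumpSeqOfPerm_le {n m : ℕ} (σ : Equiv.Perm (Fin n)) (ℓ : Fin n → ℕ)
    (hmono : Monotone ℓ) (hlt : ∀ p, ℓ p < m)
    (hrun : ∀ p q, p < q → ℓ p = ℓ q → (σ p < σ q ↔ Even (ℓ p))) :
    turnCount n (jumpSeqOfPerm σ) ≤ m := by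
  have ha := isJumpSeq_jumpSeqOfPerm σ
  rw [ha.turnCount_eq]
  let c : ℕ → ℕ := fun i => if h : i < n then ℓ ⟨i, h⟩ else m
  have hcn : c n = m := by simp [c]
  rw [← hcn]
  refine card_filter_ne_succ_le _ c (fun i hi => ?_) (fun i hi hci => ?_) ?_
  · by_cases hi' : i + 1 < n
    · simpa [c, hi, hi'] using hmono (Fin.mk_le_mk.mpr (Nat.le_succ i))
    · simpa [c, hi, hi'] using (hlt _).le
  · have hi' : i + 1 < n := by
      by_contra hi'
      simp only [c, hi, hi', dif_pos, dif_neg, not_false_eq_true] at hci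
      exact (hlt _).ne hci
    simp only [c, hi, hi', dif_pos] at hci ⊢
    have e₁ : jumpSeqOfPerm σ (i + 1) = σ ⟨i, hi⟩ + 1 := jumpSeqOfPerm_succ σ ⟨i, hi⟩
    have e₂ : jumpSeqOfPerm σ (i + 1 + 1) = σ ⟨i + 1, hi'⟩ + 1 :=
      jumpSeqOfPerm_succ σ ⟨i + 1, hi'⟩
    rw [e₁, e₂, ← hci, decide_eq_decide, add_lt_add_iff_right, Fin.val_fin_lt]
    exact hrun ⟨i, hi⟩ ⟨i + 1, hi'⟩ (Fin.mk_lt_mk.mpr i.lt_succ_self) hci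
  · have h₀ : jumpSeqOfPerm σ 0 = 0 := jumpSeqOfPerm_of_notMem_Icc σ (by simp)
    have h₁ := ha.ne_succ (Nat.zero_le n)
    simp only [decide_eq_true_eq]
    omega

/-- if `u = τ_1^{r_1} ⋯ τ_m^{r_m}` is a permutation of `w`, then there
is a jump sequence `ā` with `w_ā = u` and at most `m` turning indices. -/
theorem rev_le_blocks {α : Type*} [Inhabited α] (w u : List α) (m : ℕ)
    (τ : Fin m → α) (r : Fin m → ℕ)
    (hu : u = (List.ofFn (fun j => List.replicate (r j) (τ j))).flatten)
    (hperm : u.Perm w) :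
    ∃ a : ℕ → ℕ, IsJumpSeq w.length a ∧ applyJump a w = u ∧
      turnCount w.length a ≤ m := by
  obtain ⟨β, hβ, huβ⟩ := exists_monotone_getElem_flatten_ofFn_replicate τ r hu
  obtain ⟨s, hs⟩ := hperm.exists_equiv_getElem
  have hlen := hperm.length_eq
  let g : Fin w.length → ℕ := fun k => β (s.symm k)
  let s' : Equiv.Perm (Fin w.length) := (finCongr hlen).symm.trans s
  have hgs' : g ∘ s' = fun p => (β (Fin.cast hlen.symm p) : ℕ) := by ext; simp [g, s']
  have hmono : Monotone (g ∘ s') :=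
    hgs' ▸ Fin.val_strictMono.monotone.comp (hβ.comp (Fin.castOrderIso hlen.symm).monotone)
  obtain ⟨σ, hσ, hrun⟩ := exists_boustrophedon_sort g s' hmono
  refine ⟨jumpSeqOfPerm σ, isJumpSeq_jumpSeqOfPerm σ, ?_,
    turnCount_jumpSeqOfPerm_le σ (g ∘ σ) (hσ ▸ hmono) (fun p => (β _).2) hrun⟩
  rw [applyJump_jumpSeqOfPerm]
  refine List.ext_getElem (by simp [hlen]) fun i h₁ h₂ => ?_
  let p : Fin w.length := ⟨i, by simpa using h₁⟩
  have hβσ : β (s.symm (σ p)) = β ⟨i, h₂⟩ :=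
    Fin.ext (by simpa [g, s', p, Fin.cast] using congrFun hσ p)
  calc (List.ofFn fun p => w[σ p])[i] = w[s (s.symm (σ p))] := by simp [p]
    _ = u[i] := by rw [hs, huβ, hβσ, ← huβ, Fin.getElem_fin]
end
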